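/- arXiv:1509.02485 — 2 statements merged into one kernel-verified Lean document; each statement's English description precedes it below -/
import Mathlib

section
/- Let G = (V,E) be a finite simple graph and ≺ a linear order on V. A 0/1 vector x indexed by the arcs of G (ordered non-edges) is the representative vector of some proper coloring of G if and only if the set of arcs {a : x_a = 1} is an independent (stable) set of the Cornaz–Jost graph R≺(G). -/
open scoped Classical

/-- `(u, v)` is an arc of `G` w.r.t. the order `lt`: `u ≺ v` and `uv ∉ E`. -/
abbrev IsArcPair {V : Type*} (G : SimpleGraph V) (lt : V → V → Prop) (p : V × V) : Prop :=
  lt p.1 p.2 ∧ ¬ G.Adj p.1 p.2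

/-- The set of arcs of `G` (ordered non-edges), as a type. -/
abbrev Arc {V : Type*} (G : SimpleGraph V) (lt : V → V → Prop) : Type _ :=
  {p : V × V // IsArcPair G lt p}

/-- A proper coloring of a graph, as a color function. -/
def ProperColoring {W : Type*} (H : SimpleGraph W) (c : W → ℕ) : Prop :=
  ∀ u v, H.Adj u v → c u ≠ c v

/-- `u` is the `lt`-least element of its color class under `c`. -/
def IsClassRep {V : Type*} (lt : V → V → Prop) (c : V → ℕ) (u : V) : Prop :=
  ∀ w, c w = c u → u = w ∨ lt u w

/-- The representative vector of a coloring `c`: `x (u,v) = 1` iff `u` and `v` have the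
same color and `u` is the `lt`-least element of that color class. -/
noncomputable def repVec {V : Type*} (G : SimpleGraph V) (lt : V → V → Prop) (c : V → ℕ) :
    Arc G lt → ℝ := fun a =>
  if c a.1.1 = c a.1.2 ∧ IsClassRep lt c a.1.1 then 1 else 0

/-- The coloring polytope: convex hull of representative vectors of proper colorings. -/
noncomputable def COL {V : Type*} (G : SimpleGraph V) (lt : V → V → Prop) :
    Set (Arc G lt → ℝ) :=
  convexHull ℝ {x | ∃ c : V → ℕ, ProperColoring G c ∧ x = repVec G lt c}

/-- A stable (independent) set of a graph. -/
def IsStableSet {W : Type*} (H : SimpleGraph W) (s : Set W) : Prop :=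
  ∀ a ∈ s, ∀ b ∈ s, ¬ H.Adj a b

/-- The stable set polytope of a graph. -/
noncomputable def STAB {W : Type*} (H : SimpleGraph W) : Set (W → ℝ) :=
  convexHull ℝ {x | ∃ s : Set W, IsStableSet H s ∧ x = s.indicator 1}

/-- The Cornaz–Jost graph `R≺(G)`: vertices are the arcs of `G`; two distinct arcs
`(a,b)` and `(c,d)` are adjacent iff they share an endpoint and it is not the case that
`a = c` and `bd ∉ E`. -/
def RGraph {V : Type*} (G : SimpleGraph V) (lt : V → V → Prop) : SimpleGraph (Arc G lt) where
  Adj p q := p ≠ q ∧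
    (p.1.1 = q.1.1 ∨ p.1.1 = q.1.2 ∨ p.1.2 = q.1.1 ∨ p.1.2 = q.1.2) ∧
    ¬ (p.1.1 = q.1.1 ∧ ¬ G.Adj p.1.2 q.1.2)
  symm := ⟨by
    rintro p q ⟨h1, h2, h3⟩
    refine ⟨h1.symm, ?_, fun hc => h3 ⟨hc.1.symm, fun h => hc.2 h.symm⟩⟩
    rcases h2 with h | h | h | h
    · exact Or.inl h.symm
    · exact Or.inr (Or.inr (Or.inl h.symm))
    · exact Or.inr (Or.inl h.symm)
    · exact Or.inr (Or.inr (Or.inr h.symm))⟩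
  loopless := ⟨fun p h => h.1 rfl⟩

/-- The line graph of the complement of `G`, with the edges of the complement
identified with the arcs of `G`: two distinct arcs are adjacent iff they share an endpoint. -/
def lineGraphArc {V : Type*} (G : SimpleGraph V) (lt : V → V → Prop) :
    SimpleGraph (Arc G lt) where
  Adj p q := p ≠ q ∧
    (p.1.1 = q.1.1 ∨ p.1.1 = q.1.2 ∨ p.1.2 = q.1.1 ∨ p.1.2 = q.1.2)
  symm := ⟨by
    rintro p q ⟨h1, h2⟩
    refine ⟨h1.symm, ?_⟩
    rcases h2 with h | h | h | h
    · exact Or.inl h.symm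
    · exact Or.inr (Or.inr (Or.inl h.symm))
    · exact Or.inr (Or.inl h.symm)
    · exact Or.inr (Or.inr (Or.inr h.symm))⟩
  loopless := ⟨fun p h => h.1 rfl⟩

/-- The independence number of `H` is at most 2. -/
def AlphaLeTwo {W : Type*} (H : SimpleGraph W) : Prop :=
  ∀ s : Set W, IsStableSet H s → s.ncard ≤ 2

/-- The chromatic number of a graph, as a natural number. -/
noncomputable def chromNum {W : Type*} (H : SimpleGraph W) : ℕ :=
  sInf {n : ℕ | ∃ c : W → ℕ, ProperColoring H c ∧ ∀ v, c v < n}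

/-- `H` contains a copy of `F` as a (not necessarily induced) subgraph. -/
def ContainsCopy {α β : Type*} (F : SimpleGraph α) (H : SimpleGraph β) : Prop :=
  ∃ f : α → β, Function.Injective f ∧ ∀ a b, F.Adj a b → H.Adj (f a) (f b)

/-- `H` contains an induced copy of `F`. -/
def ContainsInducedCopy {α β : Type*} (F : SimpleGraph α) (H : SimpleGraph β) : Prop :=
  ∃ f : α → β, Function.Injective f ∧ ∀ a b, H.Adj (f a) (f b) ↔ F.Adj a b

/-- The paw: a triangle `{0,1,2}` plus the vertex `3` adjacent only to `2`. -/
def pawGraph : SimpleGraph (Fin 4) :=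
  SimpleGraph.fromEdgeSet {s(0, 1), s(0, 2), s(1, 2), s(2, 3)}

/-- The kite: the paw plus the vertex `4` adjacent only to `3` (the paw's degree-1 vertex). -/
def kiteGraph : SimpleGraph (Fin 5) :=
  SimpleGraph.fromEdgeSet {s(0, 1), s(0, 2), s(1, 2), s(2, 3), s(3, 4)}

/-- The claw `K_{1,3}`: vertex `0` adjacent to `1`, `2`, `3`. -/
def clawGraph : SimpleGraph (Fin 4) :=
  SimpleGraph.fromEdgeSet {s(0, 1), s(0, 2), s(0, 3)}

/-- A graph is claw-free if it has no induced copy of `K_{1,3}`. -/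
def ClawFree {W : Type*} (H : SimpleGraph W) : Prop :=
  ¬ ContainsInducedCopy clawGraph H

/-- A graph is quasi-line if the neighborhood of every vertex can be partitioned
into two cliques. -/
def QuasiLine {W : Type*} (H : SimpleGraph W) : Prop :=
  ∀ v : W, ∃ K₁ K₂ : Set W, Disjoint K₁ K₂ ∧ K₁ ∪ K₂ = {w | H.Adj v w} ∧
    H.IsClique K₁ ∧ H.IsClique K₂

/-- A graph is hypomatchable if deleting any vertex leaves a graph with a perfect matching. -/
def Hypomatchable {W : Type*} (H : SimpleGraph W) : Prop :=
  ∀ u : W, ∃ M : (H.induce {v | v ≠ u}).Subgraph, M.IsPerfectMatching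

/-- A graph is 2-connected: connected, at least 3 vertices, and deleting any vertex
leaves it connected. -/
def TwoConnected {W : Type*} [Fintype W] (H : SimpleGraph W) : Prop :=
  H.Connected ∧ 3 ≤ Fintype.card W ∧ ∀ u : W, (H.induce {v | v ≠ u}).Connected

/-- A set of arcs is a matching of the complement of `G`: no two distinct arcs share
an endpoint. -/
def IsMatchingArcSet {V : Type*} (G : SimpleGraph V) (lt : V → V → Prop)
    (m : Set (Arc G lt)) : Prop :=
  ∀ p ∈ m, ∀ q ∈ m, p ≠ q →
    ¬ (p.1.1 = q.1.1 ∨ p.1.1 = q.1.2 ∨ p.1.2 = q.1.1 ∨ p.1.2 = q.1.2)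

/-- The matching polytope of the complement of `G`, viewed in `ℝ^A` via the
identification of edges of the complement with arcs. -/
noncomputable def MATCHarcs {V : Type*} (G : SimpleGraph V) (lt : V → V → Prop) :
    Set (Arc G lt → ℝ) :=
  convexHull ℝ {x | ∃ m : Set (Arc G lt), IsMatchingArcSet G lt m ∧ x = m.indicator 1}

/-- Restriction of a vector indexed by arcs of `G` to the arcs of an induced subgraph. -/
def restrictVec {V : Type*} (G : SimpleGraph V) (lt : V → V → Prop) (W : Set V)
    (x : Arc G lt → ℝ) : Arc (G.induce W) (fun a b => lt ↑a ↑b) → ℝ :=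
  fun a => x ⟨(↑a.1.1, ↑a.1.2), a.2.1, a.2.2⟩

/-! In the representative vector of a coloring, every arc with value `1` runs from the least
element of a color class to another member of it. So two such arcs sharing an endpoint share
their tail, and their heads lie in one class, hence are non-adjacent: the support is stable in
`R≺(G)`. Conversely, in a stable set `S` of `R≺(G)` every vertex is the head of at most one arc
and no head is a tail. Sending each head to its tail and every other vertex to itself is then a
retraction onto `lt`-smaller vertices, whose fibres form a proper coloring with `S` as its set of
representative arcs. -/

section CornazJost

variable {V : Type*} {G : SimpleGraph V} {lt : V → V → Prop}

lemma repVec_eq_zero_or_one (c : V → ℕ) (a : Arc G lt) :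
    repVec G lt c a = 0 ∨ repVec G lt c a = 1 := by
  unfold repVec
  split_ifs <;> simp

lemma repVec_eq_one_iff (c : V → ℕ) (a : Arc G lt) :
    repVec G lt c a = 1 ↔ c a.1.1 = c a.1.2 ∧ IsClassRep lt c a.1.1 := by
  unfold repVec
  split_ifs with h <;> simp [h]

section ClassRep

variable [Std.Asymm lt] {c : V → ℕ} {u v w : V}

lemma IsClassRep.not_lt (hu : IsClassRep lt c u) (hw : c w = c u) : ¬ lt w u := by
  intro hwu
  rcases hu w hw with rfl | huw
  · exact irrefl _ hwu
  · exact asymm huw hwu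

lemma IsClassRep.eq (hu : IsClassRep lt c u) (hv : IsClassRep lt c v) (h : c u = c v) :
    u = v :=
  (hu v h.symm).resolve_right (hv.not_lt h)

lemma isClassRep_iff_of_fibres {r : V → V} (hc : ∀ u v, c u = c v ↔ r u = r v)
    (hr : ∀ v, r (r v) = r v) (hle : ∀ v, r v = v ∨ lt (r v) v) :
    IsClassRep lt c u ↔ r u = u := by
  refine ⟨fun hu => ?_, fun hu w hw => ?_⟩
  · rcases hle u with h | h
    · exact h
    · exact absurd h (hu.not_lt ((hc _ _).2 (hr u)))
  · rw [hc, hu] at hw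
    rcases hle w with h | h
    · exact Or.inl (hw ▸ h)
    · exact Or.inr (hw ▸ h)

lemma repVec_eq_one_iff_of_fibres {r : V → V} (hc : ∀ u v, c u = c v ↔ r u = r v)
    (hr : ∀ v, r (r v) = r v) (hle : ∀ v, r v = v ∨ lt (r v) v) (a : Arc G lt) :
    repVec G lt c a = 1 ↔ r a.1.2 = a.1.1 := by
  rw [repVec_eq_one_iff, hc, isClassRep_iff_of_fibres hc hr hle]
  refine ⟨fun ⟨h, h'⟩ => h ▸ h', fun h => ?_⟩
  have : r a.1.1 = a.1.1 := by rw [← h, hr]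
  exact ⟨this.trans h.symm, this⟩

end ClassRep

lemma isStableSet_rGraph_iff {S : Set (Arc G lt)} :
    IsStableSet (RGraph G lt) S ↔ ∀ a ∈ S, ∀ b ∈ S,
      (a.1.1 = b.1.1 ∨ a.1.1 = b.1.2 ∨ a.1.2 = b.1.1 ∨ a.1.2 = b.1.2) →
        a.1.1 = b.1.1 ∧ ¬ G.Adj a.1.2 b.1.2 := by
  refine forall₂_congr fun a _ => forall₂_congr fun b _ => ?_
  by_cases hab : a = b
  · subst hab
    simp [RGraph]
  · simp only [RGraph, ne_eq, hab, not_false_eq_true, true_and, not_and, not_not]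
    tauto

lemma isStableSet_rGraph_repVec [Std.Asymm lt] {c : V → ℕ} (hc : ProperColoring G c) :
    IsStableSet (RGraph G lt) {a | repVec G lt c a = 1} := by
  refine isStableSet_rGraph_iff.2 fun a ha b hb hshare => ?_
  obtain ⟨hca, hra⟩ := (repVec_eq_one_iff c a).1 ha
  obtain ⟨hcb, hrb⟩ := (repVec_eq_one_iff c b).1 hb
  rcases hshare with h | h | h | h
  · exact ⟨h, fun hadj => hc _ _ hadj (by rw [← hca, ← hcb, h])⟩
  · exact absurd (h ▸ b.2.1) (hra.not_lt (by rw [hcb, h]))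
  · exact absurd (h ▸ a.2.1) (hrb.not_lt (by rw [hca, h]))
  · refine ⟨hra.eq hrb (by rw [hca, hcb, h]), ?_⟩
    rw [h]
    exact G.irrefl

section ClassRepOf

variable (S : Set (Arc G lt))

noncomputable def classRepOf (v : V) : V :=
  if h : ∃ a ∈ S, a.1.2 = v then h.choose.1.1 else v

lemma classRepOf_cases (v : V) :
    (classRepOf S v = v ∧ ∀ a ∈ S, a.1.2 ≠ v) ∨
      ∃ a ∈ S, a.1.1 = classRepOf S v ∧ a.1.2 = v := by
  by_cases h : ∃ a ∈ S, a.1.2 = v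
  · exact Or.inr ⟨h.choose, h.choose_spec.1, by rw [classRepOf, dif_pos h], h.choose_spec.2⟩
  · exact Or.inl ⟨by rw [classRepOf, dif_neg h], fun a ha hv => h ⟨a, ha, hv⟩⟩

lemma classRepOf_eq_or_lt (v : V) : classRepOf S v = v ∨ lt (classRepOf S v) v := by
  rcases classRepOf_cases S v with ⟨h, -⟩ | ⟨a, -, h1, h2⟩
  · exact Or.inl h
  · exact Or.inr (h1 ▸ h2 ▸ a.2.1)

variable {S}

lemma IsStableSet.eq_of_head_eq (hS : IsStableSet (RGraph G lt) S) {a b : Arc G lt}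
    (ha : a ∈ S) (hb : b ∈ S) (h : a.1.2 = b.1.2) : a = b :=
  Subtype.ext (Prod.ext (isStableSet_rGraph_iff.1 hS a ha b hb (by simp [h])).1 h)

lemma IsStableSet.head_ne_tail [Std.Irrefl lt] (hS : IsStableSet (RGraph G lt) S)
    {a b : Arc G lt} (ha : a ∈ S) (hb : b ∈ S) : a.1.2 ≠ b.1.1 := by
  intro h
  have htail := (isStableSet_rGraph_iff.1 hS a ha b hb (by simp [h])).1
  exact irrefl _ (h ▸ htail ▸ a.2.1)

lemma classRepOf_head (hS : IsStableSet (RGraph G lt) S) {a : Arc G lt} (ha : a ∈ S) :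
    classRepOf S a.1.2 = a.1.1 := by
  rcases classRepOf_cases S a.1.2 with ⟨-, h⟩ | ⟨b, hb, h1, h2⟩
  · exact absurd rfl (h a ha)
  · rw [← h1, hS.eq_of_head_eq hb ha h2]

lemma classRepOf_tail [Std.Irrefl lt] (hS : IsStableSet (RGraph G lt) S) {a : Arc G lt}
    (ha : a ∈ S) : classRepOf S a.1.1 = a.1.1 := by
  rcases classRepOf_cases S a.1.1 with ⟨h, -⟩ | ⟨b, hb, -, h2⟩
  · exact h
  · exact absurd h2 (hS.head_ne_tail hb ha)

lemma classRepOf_idem [Std.Irrefl lt] (hS : IsStableSet (RGraph G lt) S) (v : V) :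
    classRepOf S (classRepOf S v) = classRepOf S v := by
  rcases classRepOf_cases S v with ⟨h, -⟩ | ⟨a, ha, h1, -⟩
  · rw [h, h]
  · rw [← h1, classRepOf_tail hS ha]

lemma classRepOf_head_eq_iff [Std.Irrefl lt] (hS : IsStableSet (RGraph G lt) S)
    (a : Arc G lt) : classRepOf S a.1.2 = a.1.1 ↔ a ∈ S := by
  refine ⟨fun h => ?_, classRepOf_head hS⟩
  rcases classRepOf_cases S a.1.2 with ⟨h', -⟩ | ⟨b, hb, h1, h2⟩
  · exact absurd (h.symm.trans h' ▸ a.2.1) (irrefl _)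
  · rwa [Subtype.ext (Prod.ext (h1.trans h) h2)] at hb

lemma classRepOf_ne_of_adj (hS : IsStableSet (RGraph G lt) S) {u v : V} (huv : G.Adj u v) :
    classRepOf S u ≠ classRepOf S v := by
  intro h
  rcases classRepOf_cases S u with ⟨hu, -⟩ | ⟨a, ha, ha1, ha2⟩ <;>
    rcases classRepOf_cases S v with ⟨hv, -⟩ | ⟨b, hb, hb1, hb2⟩
  · exact G.ne_of_adj huv (hu.symm.trans (h.trans hv))
  · exact b.2.2 (by rwa [hb1, ← h, hu, hb2])
  · exact a.2.2 (by rwa [ha1, h, hv, ha2, G.adj_comm])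
  · refine (isStableSet_rGraph_iff.1 hS a ha b hb (Or.inl (by rw [ha1, hb1, h]))).2 ?_
    rwa [ha2, hb2]

end ClassRepOf

theorem exists_properColoring_repVec_eq_one_iff [IsStrictOrder V lt] [Countable V]
    {S : Set (Arc G lt)} (hS : IsStableSet (RGraph G lt) S) :
    ∃ c : V → ℕ, ProperColoring G c ∧ ∀ a, repVec G lt c a = 1 ↔ a ∈ S := by
  obtain ⟨e, he⟩ := Countable.exists_injective_nat V
  refine ⟨e ∘ classRepOf S, fun u v huv h => classRepOf_ne_of_adj hS huv (he h), fun a => ?_⟩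
  rw [repVec_eq_one_iff_of_fibres (c := e ∘ classRepOf S) (fun u v => he.eq_iff)
    (classRepOf_idem hS) (classRepOf_eq_or_lt S), classRepOf_head_eq_iff hS]

end CornazJost

theorem statement0_general {V : Type*} [Fintype V]
    (G : SimpleGraph V)
    (lt : V → V → Prop) (hlt : IsStrictTotalOrder V lt)
    (x : Arc G lt → ℝ) (hx : ∀ a, x a = 0 ∨ x a = 1) :
    (∃ c : V → ℕ, ProperColoring G c ∧ x = repVec G lt c) ↔
      IsStableSet (RGraph G lt) {a | x a = 1} := by
  constructor
  · rintro ⟨c, hc, rfl⟩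
    exact isStableSet_rGraph_repVec hc
  · intro hS
    obtain ⟨c, hc, hrep⟩ := exists_properColoring_repVec_eq_one_iff hS
    refine ⟨c, hc, funext fun a => ?_⟩
    have hrep_a := hrep a
    rcases hx a with h | h <;> rcases repVec_eq_zero_or_one c a with h' | h' <;>
      simp_all

/-- A 0/1 vector indexed by arcs is the representative vector of a proper
coloring of `G` iff its support is a stable set of the Cornaz–Jost graph `R≺(G)`. -/
theorem statement0 {V : Type*} [Fintype V] [DecidableEq V]
    (G : SimpleGraph V) [DecidableRel G.Adj]
    (lt : V → V → Prop) [DecidableRel lt] (hlt : IsStrictTotalOrder V lt)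
    (x : Arc G lt → ℝ) (hx : ∀ a, x a = 0 ∨ x a = 1) :
    (∃ c : V → ℕ, ProperColoring G c ∧ x = repVec G lt c) ↔
      IsStableSet (RGraph G lt) {a | x a = 1} :=
  statement0_general G lt hlt x hx
end

section
/- Let G = (V,E) be a finite simple graph. Then the Cornaz–Jost graph R≺(G) is a quasi-line graph for every linear order ≺ on V if and only if the complement of G does not contain a kite as a subgraph. -/
open scoped Classical

/-!
A kite in `Gᶜ` with triangle `v₀v₁v₂` and pendant path `v₂v₃v₄`, under an order starting with
`v₄ ≺ v₃ ≺ v₂`, makes the arc `(v₃, v₂)` the centre of a claw of `R≺(G)` with leaves `(v₄, v₃)`,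
`(v₂, v₀)`, `(v₂, v₁)`; a quasi-line graph has no claw.

Conversely, every neighbour of an arc `(a, b)` touches `a` or `b`. Among the arcs touching one
endpoint `u`, two can be non-adjacent only if both have tail `u` and their heads span an edge of
`Gᶜ`. Without a kite in `Gᶜ`, these heads span no triangle and no path on four vertices of `Gᶜ`,
so they induce a disjoint union of stars, which is 2-colourable. Moreover an edge among the heads
on one side completes a kite with any neighbour on the other side. Colouring the two sides
accordingly splits the neighbourhood into two cliques.
-/
lemma exists_isStrictTotalOrder_of_rank {V : Type*} (p : V → ℕ) :
    ∃ lt : V → V → Prop, IsStrictTotalOrder V lt ∧ ∀ u v, p u < p v → lt u v := by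
  let r : ℕ × V → ℕ × V → Prop := Prod.Lex (· < ·) WellOrderingRel
  have : IsWellOrder (ℕ × V) r := inferInstance
  exact ⟨Function.onFun r fun v => (p v, v),
    Function.Injective.isStrictTotalOrder_onFun r fun _ _ h => congrArg Prod.snd h,
    fun _ _ h => Prod.Lex.left _ _ h⟩

section QuasiLine

variable {W : Type*} {H : SimpleGraph W}

lemma QuasiLine.adj_or_adj_or_adj (hH : QuasiLine H) {v x y z : W} (hx : H.Adj v x)
    (hy : H.Adj v y) (hz : H.Adj v z) (hxy : x ≠ y) (hxz : x ≠ z) (hyz : y ≠ z) :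
    H.Adj x y ∨ H.Adj x z ∨ H.Adj y z := by
  obtain ⟨K₁, K₂, -, hK, hK₁, hK₂⟩ := hH v
  have mem : ∀ {w}, H.Adj v w → w ∈ K₁ ∨ w ∈ K₂ := fun hw => by
    rw [← Set.mem_union, hK]; exact hw
  rcases mem hx with hx | hx <;> rcases mem hy with hy | hy <;> rcases mem hz with hz | hz <;>
  first
    | exact Or.inl (hK₁ hx hy hxy) | exact Or.inl (hK₂ hx hy hxy)
    | exact Or.inr (Or.inl (hK₁ hx hz hxz)) | exact Or.inr (Or.inl (hK₂ hx hz hxz))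
    | exact Or.inr (Or.inr (hK₁ hy hz hyz)) | exact Or.inr (Or.inr (hK₂ hy hz hyz))

lemma quasiLine_of_forall_exists_coloring
    (h : ∀ v, ∃ c : W → Prop, ∀ x y, H.Adj v x → H.Adj v y → x ≠ y → (c x ↔ c y) → H.Adj x y) :
    QuasiLine H := by
  intro v
  obtain ⟨c, hc⟩ := h v
  refine ⟨{x | H.Adj v x ∧ c x}, {x | H.Adj v x ∧ ¬c x},
    Set.disjoint_left.mpr fun _ h h' => h'.2 h.2, ?_, ?_, ?_⟩
  · ext x; by_cases hx : c x <;> simp [hx]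
  · exact fun x hx y hy hxy => hc x y hx.1 hy.1 hxy (iff_of_true hx.2 hy.2)
  · exact fun x hx y hy hxy => hc x y hx.1 hy.1 hxy (iff_of_false hx.2 hy.2)

end QuasiLine

namespace SimpleGraph

variable {α : Type*} {H : SimpleGraph α}

lemma not_nontrivial_neighborSet_of_adj
    (hT : ∀ x y z, H.Adj x y → H.Adj y z → H.Adj x z → False)
    (hP : ∀ w x y z, H.Adj w x → H.Adj x y → H.Adj y z → w ≠ y → x ≠ z → w ≠ z → False)
    {y z : α} (h : H.Adj y z) (hy : (H.neighborSet y).Nontrivial) :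
    ¬(H.neighborSet z).Nontrivial := fun hz => by
  obtain ⟨w, hw, hwz⟩ := hy.exists_ne z
  obtain ⟨x, hx, hxy⟩ := hz.exists_ne y
  rcases eq_or_ne w x with rfl | hwx
  · exact hT y z w h hx hw
  · exact hP w y z x hw.symm h hx hwz hxy.symm hwx

lemma eq_of_adj_of_not_nontrivial {y z w : α} (hy : ¬(H.neighborSet y).Nontrivial)
    (hz : H.Adj y z) (hw : H.Adj y w) : w = z :=
  Set.not_nontrivial_iff.mp hy hw hz

/-- Every component is a star; colour the leaves of stars with at least two leaves and the
end of each isolated edge that is larger in a well-order. -/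
theorem exists_coloring_of_no_triangle_of_no_path
    (hT : ∀ x y z, H.Adj x y → H.Adj y z → H.Adj x z → False)
    (hP : ∀ w x y z, H.Adj w x → H.Adj x y → H.Adj y z → w ≠ y → x ≠ z → w ≠ z → False) :
    ∃ c : α → Prop, (∀ y z, H.Adj y z → (c y ↔ ¬c z)) ∧ ∀ y, c y → ∃ z, H.Adj y z := by
  set c : α → Prop := fun y => ¬(H.neighborSet y).Nontrivial ∧
    ∃ z, H.Adj y z ∧ ((H.neighborSet z).Nontrivial ∨ WellOrderingRel z y)
  have leaf : ∀ {y z}, H.Adj y z → ¬(H.neighborSet y).Nontrivial →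
      ¬(H.neighborSet z).Nontrivial → (c y ↔ WellOrderingRel z y) := fun {y z} h hy hz =>
    ⟨fun ⟨_, w, hw, hw'⟩ => by
      rw [eq_of_adj_of_not_nontrivial hy h hw] at hw'; exact hw'.resolve_left hz,
     fun hr => ⟨hy, z, h, Or.inr hr⟩⟩
  refine ⟨c, fun y z h => ?_, fun y hy => hy.2.imp fun _ hz => hz.1⟩
  by_cases hy : (H.neighborSet y).Nontrivial
  · exact iff_of_false (fun hc => hc.1 hy)
      (not_not.mpr ⟨not_nontrivial_neighborSet_of_adj hT hP h hy, y, h.symm, Or.inl hy⟩)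
  by_cases hz : (H.neighborSet z).Nontrivial
  · exact iff_of_true ⟨hy, z, h, Or.inl hz⟩ fun hc => hc.1 hz
  rw [leaf h hy hz, leaf h.symm hz hy]
  rcases trichotomous_of WellOrderingRel z y with hzy | rfl | hyz
  · exact iff_of_true hzy (asymm hzy)
  · exact (h.ne rfl).elim
  · exact iff_of_false (asymm hyz) (not_not.mpr hyz)

end SimpleGraph

section Kite

variable {V : Type*} {K : SimpleGraph V}

lemma containsCopy_kite {v₀ v₁ v₂ v₃ v₄ : V}
    (h₀₁ : K.Adj v₀ v₁) (h₀₂ : K.Adj v₀ v₂) (h₁₂ : K.Adj v₁ v₂) (h₂₃ : K.Adj v₂ v₃)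
    (h₃₄ : K.Adj v₃ v₄) (h₀₃ : v₀ ≠ v₃) (h₀₄ : v₀ ≠ v₄) (h₁₃ : v₁ ≠ v₃) (h₁₄ : v₁ ≠ v₄)
    (h₂₄ : v₂ ≠ v₄) : ContainsCopy kiteGraph K := by
  refine ⟨![v₀, v₁, v₂, v₃, v₄], fun i j hij => ?_, fun i j hij => ?_⟩
  · have := h₀₁.ne; have := h₀₂.ne; have := h₁₂.ne; have := h₂₃.ne; have := h₃₄.ne
    fin_cases i <;> fin_cases j <;> simp_all
  · fin_cases i <;> fin_cases j <;> simp_all [kiteGraph, K.adj_comm]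

variable {u v : V} {Y : Set V}

lemma false_of_pendant (hk : ¬ContainsCopy kiteGraph K) (huv : K.Adj u v)
    (hY : ∀ y ∈ Y, K.Adj u y) (hvY : v ∉ Y) {y y' x : V} (hy : y ∈ Y) (hy' : y' ∈ Y)
    (hyy' : K.Adj y y') (hvx : K.Adj v x) (hxu : x ≠ u) (hxY : x ∉ Y) : False :=
  hk (containsCopy_kite hyy' (hY y hy).symm (hY y' hy').symm huv hvx
    (ne_of_mem_of_not_mem hy hvY) (ne_of_mem_of_not_mem hy hxY)
    (ne_of_mem_of_not_mem hy' hvY) (ne_of_mem_of_not_mem hy' hxY) hxu.symm)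

theorem exists_coloring_of_not_containsCopy_kite (hk : ¬ContainsCopy kiteGraph K)
    (huv : K.Adj u v) (hY : ∀ y ∈ Y, K.Adj u y) (hvY : v ∉ Y) :
    ∃ c : V → Prop, (∀ y ∈ Y, ∀ z ∈ Y, K.Adj y z → (c y ↔ ¬c z)) ∧
      ∀ y, c y → y ∈ Y ∧ ∃ z ∈ Y, K.Adj y z := by
  have hadj : ∀ {y z}, (K.induce Y).spanningCoe.Adj y z ↔ K.Adj y z ∧ y ∈ Y ∧ z ∈ Y := by simp
  obtain ⟨c, hc, hc'⟩ :=
    SimpleGraph.exists_coloring_of_no_triangle_of_no_path (H := (K.induce Y).spanningCoe)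
      (fun x y z hxy hyz hxz => by
        rw [hadj] at hxy hyz hxz
        exact hk (containsCopy_kite hxy.1 hxz.1 hyz.1 (hY z hxz.2.2).symm huv
          (hY x hxy.2.1).ne' (ne_of_mem_of_not_mem hxy.2.1 hvY) (hY y hyz.2.1).ne'
          (ne_of_mem_of_not_mem hyz.2.1 hvY) (ne_of_mem_of_not_mem hxz.2.2 hvY)))
      (fun w x y z hwx hxy hyz hwy hxz hwz => by
        rw [hadj] at hwx hxy hyz
        exact hk (containsCopy_kite (hY w hwx.2.1) (hY x hwx.2.2) hwx.1 hxy.1 hyz.1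
          (hY y hyz.2.1).ne (hY z hyz.2.2).ne hwy hwz hxz))
  refine ⟨c, fun y hy z hz h => hc y z (hadj.mpr ⟨h, hy, hz⟩), fun y hy => ?_⟩
  obtain ⟨z, hz⟩ := hc' y hy
  rw [hadj] at hz
  exact ⟨hz.2.1, z, hz.2.2, hz.1⟩

end Kite

lemma Arc.compl_adj {V : Type*} {G : SimpleGraph V} {lt : V → V → Prop} [Std.Irrefl lt]
    (q : Arc G lt) : Gᶜ.Adj q.1.1 q.1.2 :=
  ⟨ne_of_irrefl q.2.1, q.2.2⟩

namespace RGraph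

variable {V : Type*} {G : SimpleGraph V} {lt : V → V → Prop} {p q : Arc G lt}

lemma adj_of_tail_ne
    (hs : p.1.1 = q.1.1 ∨ p.1.1 = q.1.2 ∨ p.1.2 = q.1.1 ∨ p.1.2 = q.1.2)
    (h : p.1.1 ≠ q.1.1) : (RGraph G lt).Adj p q :=
  ⟨fun e => h (congrArg (·.1.1) e), hs, fun h' => h h'.1⟩

lemma adj_iff_of_tail_eq (h : p.1.1 = q.1.1) :
    (RGraph G lt).Adj p q ↔ G.Adj p.1.2 q.1.2 :=
  ⟨fun hpq => by_contra fun hG => hpq.2.2 ⟨h, hG⟩,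
    fun hG => ⟨fun e => hG.ne (congrArg (·.1.2) e), Or.inl h, fun h' => h'.2 hG⟩⟩

lemma adj_of_touch_of_color {u : V} {Y : Set V} {c : V → Prop}
    (hc : ∀ y ∈ Y, ∀ z ∈ Y, Gᶜ.Adj y z → (c y ↔ ¬c z)) (hpq : p ≠ q)
    (hp : p.1.1 = u ∨ p.1.2 = u) (hq : q.1.1 = u ∨ q.1.2 = u)
    (hpY : p.1.1 = u → p.1.2 ∈ Y) (hqY : q.1.1 = u → q.1.2 ∈ Y)
    (hcol : p.1.1 = u → q.1.1 = u → (c p.1.2 ↔ c q.1.2)) : (RGraph G lt).Adj p q := by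
  by_cases htail : p.1.1 = q.1.1
  · have hu : p.1.1 = u := by
      by_contra hu
      exact hpq (Subtype.ext (Prod.ext htail
        ((hp.resolve_left hu).trans (hq.resolve_left (htail ▸ hu)).symm)))
    have hhead : p.1.2 ≠ q.1.2 := fun h => hpq (Subtype.ext (Prod.ext htail h))
    rw [adj_iff_of_tail_eq htail]
    by_contra hG
    have hdiff := hc _ (hpY hu) _ (hqY (htail ▸ hu)) ⟨hhead, hG⟩
    have hsame := hcol hu (htail ▸ hu)
    tauto
  · refine adj_of_tail_ne ?_ htail
    rcases hp with h | h <;> rcases hq with h' | h' <;> simp [h, h']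

variable {a b : V} {hab : IsArcPair G lt (a, b)}

lemma adj_head_of_tail_eq_fst (hq : (RGraph G lt).Adj ⟨(a, b), hab⟩ q) (h : q.1.1 = a) :
    G.Adj b q.1.2 :=
  by_contra fun hG => hq.2.2 ⟨h.symm, hG⟩

lemma exists_compl_adj_fst_of_touch_fst [IsStrictOrder V lt]
    (hq : (RGraph G lt).Adj ⟨(a, b), hab⟩ q) (ha : q.1.1 = a ∨ q.1.2 = a) :
    ∃ x, Gᶜ.Adj a x ∧ x ≠ b ∧ ¬(Gᶜ.Adj b x ∧ lt b x) := by
  have hq_lt := q.2.1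
  rcases ha with h | h
  · refine ⟨q.1.2, h ▸ q.compl_adj, fun hxb => hq.1 (Subtype.ext (Prod.ext h.symm hxb.symm)),
      fun hx => hx.1.2 (adj_head_of_tail_eq_fst hq h)⟩
  · refine ⟨q.1.1, h ▸ q.compl_adj.symm, fun hxb => ?_, fun hx => ?_⟩
    · rw [hxb, h] at hq_lt; exact asymm hab.1 hq_lt
    · rw [h] at hq_lt; exact asymm (_root_.trans hab.1 hx.2) hq_lt

lemma touch_snd_of_not_touch_fst (hq : (RGraph G lt).Adj ⟨(a, b), hab⟩ q)
    (ha : ¬(q.1.1 = a ∨ q.1.2 = a)) : q.1.1 = b ∨ q.1.2 = b := by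
  obtain ⟨-, hs, -⟩ := hq
  simp only at hs
  tauto

lemma exists_compl_adj_snd_of_not_touch_fst [Std.Irrefl lt]
    (hq : (RGraph G lt).Adj ⟨(a, b), hab⟩ q) (ha : ¬(q.1.1 = a ∨ q.1.2 = a)) :
    ∃ x, Gᶜ.Adj b x ∧ x ≠ a := by
  rcases touch_snd_of_not_touch_fst hq ha with h | h
  · exact ⟨q.1.2, h ▸ q.compl_adj, fun hx => ha (Or.inr hx)⟩
  · exact ⟨q.1.1, h ▸ q.compl_adj.symm, fun hx => ha (Or.inl hx)⟩

end RGraph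

theorem quasiLine_RGraph_of_not_containsCopy_kite {V : Type*} {G : SimpleGraph V}
    (hk : ¬ContainsCopy kiteGraph Gᶜ) (lt : V → V → Prop) [IsStrictOrder V lt] :
    QuasiLine (RGraph G lt) := by
  refine quasiLine_of_forall_exists_coloring fun ⟨⟨a, b⟩, hab⟩ => ?_
  have hab' : Gᶜ.Adj a b := Arc.compl_adj ⟨(a, b), hab⟩
  set Ya : Set V := {y | Gᶜ.Adj a y ∧ G.Adj b y}
  set Yb : Set V := {y | Gᶜ.Adj b y ∧ lt b y}
  have hbYa : b ∉ Ya := fun hb => hb.2.ne rfl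
  have haYb : a ∉ Yb := fun ha => asymm hab.1 ha.2
  obtain ⟨ca, hca, hca_edge⟩ :=
    exists_coloring_of_not_containsCopy_kite hk hab' (fun _ hy => hy.1) hbYa
  obtain ⟨cb, hcb, hcb_edge⟩ :=
    exists_coloring_of_not_containsCopy_kite hk hab'.symm (fun _ hy => hy.1) haYb
  let TouchA (q : Arc G lt) : Prop := q.1.1 = a ∨ q.1.2 = a
  let col (q : Arc G lt) : Prop :=
    TouchA q ∧ ¬(q.1.1 = a ∧ ca q.1.2) ∨ ¬TouchA q ∧ q.1.1 = b ∧ cb q.1.2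
  have no_cross_pair : ∀ q q', (RGraph G lt).Adj ⟨(a, b), hab⟩ q →
      (RGraph G lt).Adj ⟨(a, b), hab⟩ q' → TouchA q → ¬TouchA q' → (col q ↔ col q') → False := by
    intro q q' hq hq' hqa hq'a hcol
    by_cases hqc : q.1.1 = a ∧ ca q.1.2
    · obtain ⟨hy, z, hz, hyz⟩ := hca_edge _ hqc.2
      obtain ⟨x, hbx, hxa⟩ := RGraph.exists_compl_adj_snd_of_not_touch_fst hq' hq'a
      exact false_of_pendant hk hab' (fun _ hy => hy.1) hbYa hy hz hyz hbx hxa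
        fun hx => hbx.2 hx.2
    · have hq'c : q'.1.1 = b ∧ cb q'.1.2 := by
        have := hcol.mp (Or.inl ⟨hqa, hqc⟩)
        tauto
      obtain ⟨hy, z, hz, hyz⟩ := hcb_edge _ hq'c.2
      obtain ⟨x, hax, hxb, hxYb⟩ := RGraph.exists_compl_adj_fst_of_touch_fst hq hqa
      exact false_of_pendant hk hab'.symm (fun _ hy => hy.1) haYb hy hz hyz hax hxb hxYb
  refine ⟨col, fun q q' hq hq' hne hcol => ?_⟩
  by_cases hqa : TouchA q <;> by_cases hq'a : TouchA q'
  · refine RGraph.adj_of_touch_of_color hca hne hqa hq'a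
      (fun h => ⟨h ▸ q.compl_adj, RGraph.adj_head_of_tail_eq_fst hq h⟩)
      (fun h => ⟨h ▸ q'.compl_adj, RGraph.adj_head_of_tail_eq_fst hq' h⟩) fun h h' => ?_
    simp only [col, hqa, hq'a, h, h'] at hcol
    tauto
  · exact (no_cross_pair q q' hq hq' hqa hq'a hcol).elim
  · exact (no_cross_pair q' q hq' hq hq'a hqa hcol.symm).elim
  · refine RGraph.adj_of_touch_of_color hcb hne (RGraph.touch_snd_of_not_touch_fst hq hqa)
      (RGraph.touch_snd_of_not_touch_fst hq' hq'a) (fun h => ⟨h ▸ q.compl_adj, h ▸ q.2.1⟩)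
      (fun h => ⟨h ▸ q'.compl_adj, h ▸ q'.2.1⟩) fun h h' => ?_
    simp only [col, hqa, hq'a, h, h'] at hcol
    tauto

theorem exists_not_quasiLine_of_containsCopy_kite {V : Type*} {G : SimpleGraph V}
    (h : ContainsCopy kiteGraph Gᶜ) :
    ∃ lt : V → V → Prop, IsStrictTotalOrder V lt ∧ ¬QuasiLine (RGraph G lt) := by
  obtain ⟨f, hf, hadj⟩ := h
  have hG : ∀ i j, kiteGraph.Adj i j → ¬G.Adj (f i) (f j) := fun i j h => (hadj i j h).2
  obtain ⟨lt, hlt, hrank⟩ := exists_isStrictTotalOrder_of_rank fun v =>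
    if v = f 4 then 0 else if v = f 3 then 1 else if v = f 2 then 2 else 3
  have arc : ∀ i j, kiteGraph.Adj i j → lt (f i) (f j) → IsArcPair G lt (f i, f j) :=
    fun i j h hl => ⟨hl, hG i j h⟩
  let p : Arc G lt := ⟨(f 3, f 2), arc 3 2 (by simp [kiteGraph]) (hrank _ _ (by simp [hf.eq_iff]))⟩
  let q₁ : Arc G lt := ⟨(f 4, f 3), arc 4 3 (by simp [kiteGraph]) (hrank _ _ (by simp [hf.eq_iff]))⟩
  let q₂ : Arc G lt := ⟨(f 2, f 0), arc 2 0 (by simp [kiteGraph]) (hrank _ _ (by simp [hf.eq_iff]))⟩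
  let q₃ : Arc G lt := ⟨(f 2, f 1), arc 2 1 (by simp [kiteGraph]) (hrank _ _ (by simp [hf.eq_iff]))⟩
  refine ⟨lt, hlt, fun hql => ?_⟩
  rcases hql.adj_or_adj_or_adj (v := p) (x := q₁) (y := q₂) (z := q₃)
    (RGraph.adj_of_tail_ne (by simp [p, q₁]) (by simp [p, q₁, hf.eq_iff]))
    (RGraph.adj_of_tail_ne (by simp [p, q₂]) (by simp [p, q₂, hf.eq_iff]))
    (RGraph.adj_of_tail_ne (by simp [p, q₃]) (by simp [p, q₃, hf.eq_iff]))
    (by simp [q₁, q₂, hf.eq_iff]) (by simp [q₁, q₃, hf.eq_iff]) (by simp [q₂, q₃, hf.eq_iff])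
    with h | h | h
  · simp [RGraph, q₁, q₂, hf.eq_iff] at h
  · simp [RGraph, q₁, q₃, hf.eq_iff] at h
  · exact hG 0 1 (by simp [kiteGraph]) ((RGraph.adj_iff_of_tail_eq (p := q₂) (q := q₃) rfl).mp h)

theorem statement17_general {V : Type*}
    (G : SimpleGraph V) :
    (∀ lt : V → V → Prop, IsStrictTotalOrder V lt → QuasiLine (RGraph G lt)) ↔
      ¬ ContainsCopy kiteGraph Gᶜ := by
  refine ⟨fun hql hk => ?_, fun hk lt _ => quasiLine_RGraph_of_not_containsCopy_kite hk lt⟩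
  obtain ⟨lt, hlt, hnot⟩ := exists_not_quasiLine_of_containsCopy_kite hk
  exact hnot (hql lt hlt)

/-- `R≺(G)` is a quasi-line graph for every linear order `≺` iff the
complement of `G` contains no kite as a subgraph. -/
theorem statement17 {V : Type*} [Fintype V] [DecidableEq V]
    (G : SimpleGraph V) [DecidableRel G.Adj] :
    (∀ lt : V → V → Prop, IsStrictTotalOrder V lt → QuasiLine (RGraph G lt)) ↔
      ¬ ContainsCopy kiteGraph Gᶜ :=
  statement17_general G
end
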